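/- arXiv:1807.11419 — 7 statements merged into one kernel-verified Lean document; each statement's English description precedes it below -/
import Mathlib

section
/- Let X = Σ_{i=1}^r a_i a_iᵀ be an r-dimensional orthogonal projector in ℝ^{n×n}. Suppose M is a symmetric matrix satisfying ⟨M, X⟩ ≥ r and M ⪯ X + 0.9(Id − X). If B is an n×r real matrix with BᵀB = Id_r and ⟨M, BBᵀ⟩ = ⟨M, X⟩, then ⟨X, BBᵀ⟩ ≥ r, and consequently ‖X − BBᵀ‖_F² = 0, i.e., BBᵀ = X. -/
open Matrix

/-!
Stack the orthonormal vectors `aᵢ` as the rows of `A`, so that `X = AᵀA` with `AAᵀ = 1`, just as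
`BBᵀ = (Bᵀ)ᵀBᵀ` with `Bᵀ(Bᵀ)ᵀ = 1`: both are orthogonal projectors of trace `r`. Pairing the
Loewner bound `M ⪯ X + 0.9(1 - X)` with the projector `BBᵀ` gives
`r ≤ ⟨M, BBᵀ⟩ ≤ 0.1⟨X, BBᵀ⟩ + 0.9r`, hence `⟨X, BBᵀ⟩ ≥ r`, and then
`‖X - BBᵀ‖_F² = 2r - 2⟨X, BBᵀ⟩ ≤ 0`.
-/

namespace Matrix

theorem sum_vecMulVec_self_eq_transpose_mul_self {m n R : Type*} [Fintype m] [CommSemiring R]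
    (a : m → n → R) :
    ∑ i, vecMulVec (a i) (a i) = (of a)ᵀ * of a := by
  ext k l
  simp [sum_apply, mul_apply, vecMulVec_apply]

variable {m n : Type*} [Fintype m] [Fintype n]

theorem PosSemidef.trace_mul_transpose_mul_self_nonneg {Y : Matrix n n ℝ} (hY : Y.PosSemidef)
    (V : Matrix m n ℝ) : 0 ≤ (Y * (Vᵀ * V)).trace := by
  rw [← Matrix.mul_assoc, trace_mul_comm, ← Matrix.mul_assoc]
  simpa using (hY.mul_mul_conjTranspose_same V).trace_nonneg

variable [DecidableEq m] {V W : Matrix m n ℝ}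

theorem trace_transpose_mul_self_of_mul_transpose_eq_one (hV : V * Vᵀ = 1) :
    (Vᵀ * V).trace = Fintype.card m := by
  rw [trace_mul_comm, hV, trace_one]

theorem transpose_mul_self_mul_self_of_mul_transpose_eq_one (hV : V * Vᵀ = 1) :
    Vᵀ * V * (Vᵀ * V) = Vᵀ * V := by
  rw [Matrix.mul_assoc, ← Matrix.mul_assoc V, hV, Matrix.one_mul]

theorem card_le_trace_mul_of_posSemidef_sub {c : ℝ} (hc : c < 1) {X M : Matrix n n ℝ}
    [DecidableEq n] (hPSD : (X + c • (1 - X) - M).PosSemidef) (hW : W * Wᵀ = 1)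
    (hMW : (Fintype.card m : ℝ) ≤ (M * (Wᵀ * W)).trace) :
    (Fintype.card m : ℝ) ≤ (X * (Wᵀ * W)).trace := by
  have hpair := hPSD.trace_mul_transpose_mul_self_nonneg W
  simp only [Matrix.sub_mul, Matrix.add_mul, Matrix.smul_mul, Matrix.one_mul, trace_sub,
    trace_add, trace_smul, smul_eq_mul, trace_transpose_mul_self_of_mul_transpose_eq_one hW]
    at hpair
  have hgap : 0 ≤ (1 - c) * ((X * (Wᵀ * W)).trace - Fintype.card m) := by linarith
  exact sub_nonneg.mp ((mul_nonneg_iff_of_pos_left (sub_pos.mpr hc)).mp hgap)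

theorem trace_transpose_mul_self_sub_of_mul_transpose_eq_one (hV : V * Vᵀ = 1)
    (hW : W * Wᵀ = 1) :
    ((Vᵀ * V - Wᵀ * W)ᵀ * (Vᵀ * V - Wᵀ * W)).trace =
      2 * Fintype.card m - 2 * (Vᵀ * V * (Wᵀ * W)).trace := by
  simp only [transpose_sub, transpose_mul, transpose_transpose]
  rw [Matrix.sub_mul, Matrix.mul_sub, Matrix.mul_sub,
    transpose_mul_self_mul_self_of_mul_transpose_eq_one hV,
    transpose_mul_self_mul_self_of_mul_transpose_eq_one hW]
  simp only [trace_sub, trace_mul_comm (Wᵀ * W) (Vᵀ * V),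
    trace_transpose_mul_self_of_mul_transpose_eq_one hV,
    trace_transpose_mul_self_of_mul_transpose_eq_one hW]
  ring

theorem transpose_mul_self_eq_of_card_le_trace_mul (hV : V * Vᵀ = 1) (hW : W * Wᵀ = 1)
    (h : (Fintype.card m : ℝ) ≤ (Vᵀ * V * (Wᵀ * W)).trace) : Vᵀ * V = Wᵀ * W := by
  set D := Vᵀ * V - Wᵀ * W
  have hD_trace := trace_transpose_mul_self_sub_of_mul_transpose_eq_one hV hW
  have hD_nonneg : 0 ≤ (Dᵀ * D).trace := (posSemidef_conjTranspose_mul_self D).trace_nonneg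
  have hD_zero : (Dᴴ * D).trace = 0 := by
    rw [conjTranspose_eq_transpose_of_trivial]
    linarith
  exact sub_eq_zero.mp (trace_conjTranspose_mul_self_eq_zero_iff.mp hD_zero)

end Matrix

theorem stmt_3_general {n r : ℕ} (a : Fin r → (Fin n → ℝ))
    (ha : ∀ i j, a i ⬝ᵥ a j = if i = j then (1 : ℝ) else 0)
    (X M : Matrix (Fin n) (Fin n) ℝ)
    (hX : X = ∑ i, vecMulVec (a i) (a i))
    (hMX : (r : ℝ) ≤ (M * Xᵀ).trace)
    (hPSD : (X + (0.9 : ℝ) • ((1 : Matrix (Fin n) (Fin n) ℝ) - X) - M).PosSemidef)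
    (B : Matrix (Fin n) (Fin r) ℝ) (hB : Bᵀ * B = 1)
    (hMB : (M * (B * Bᵀ)ᵀ).trace = (M * Xᵀ).trace) :
    (r : ℝ) ≤ (X * (B * Bᵀ)ᵀ).trace ∧ B * Bᵀ = X := by
  set A : Matrix (Fin r) (Fin n) ℝ := of a
  have hA : A * Aᵀ = 1 := by
    ext i j
    simpa [A, mul_apply, dotProduct, one_apply] using ha i j
  have hXA : X = Aᵀ * A := hX.trans (sum_vecMulVec_self_eq_transpose_mul_self a)
  have hBt : Bᵀ * Bᵀᵀ = 1 := by rwa [transpose_transpose]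
  have hBBt : B * Bᵀ = Bᵀᵀ * Bᵀ := by rw [transpose_transpose]
  have hP : (B * Bᵀ)ᵀ = Bᵀᵀ * Bᵀ := by rw [transpose_mul, transpose_transpose]
  have hM : (Fintype.card (Fin r) : ℝ) ≤ (M * (Bᵀᵀ * Bᵀ)).trace := by
    rw [← hP, hMB, Fintype.card_fin]
    exact hMX
  have hXB := card_le_trace_mul_of_posSemidef_sub (by norm_num) hPSD hBt hM
  refine ⟨by simpa [hP] using hXB, ?_⟩
  rw [hBBt, hXA]
  rw [hXA] at hXB
  exact (transpose_mul_self_eq_of_card_le_trace_mul hA hBt hXB).symm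

/-- Matrix completion identifiability core argument: for a rank-`r` projector
`X = Σ aᵢaᵢᵀ` and a symmetric `M` with `⟨M,X⟩ ≥ r` and `M ⪯ X + 0.9(Id − X)`,
any `B` with `BᵀB = Id` and `⟨M, BBᵀ⟩ = ⟨M, X⟩` satisfies `⟨X, BBᵀ⟩ ≥ r` and
`BBᵀ = X`. -/
theorem stmt_3 {n r : ℕ} (a : Fin r → (Fin n → ℝ))
    (ha : ∀ i j, a i ⬝ᵥ a j = if i = j then (1 : ℝ) else 0)
    (X M : Matrix (Fin n) (Fin n) ℝ)
    (hX : X = ∑ i, vecMulVec (a i) (a i))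
    (hM : M.IsSymm)
    (hMX : (r : ℝ) ≤ (M * Xᵀ).trace)
    (hPSD : (X + (0.9 : ℝ) • ((1 : Matrix (Fin n) (Fin n) ℝ) - X) - M).PosSemidef)
    (B : Matrix (Fin n) (Fin r) ℝ) (hB : Bᵀ * B = 1)
    (hMB : (M * (B * Bᵀ)ᵀ).trace = (M * Xᵀ).trace) :
    (r : ℝ) ≤ (X * (B * Bᵀ)ᵀ).trace ∧ B * Bᵀ = X :=
  stmt_3_general a ha X M hX hMX hPSD B hB hMB
end

section
/- Let a₁,…,a_r ∈ ℝⁿ be orthonormal and let b₁,…,b_r ∈ ℝⁿ be orthonormal (the columns of a matrix B with BᵀB = Id_r). If Σ_{i,j} ⟨a_i, b_j⟩³ = r, then Σ_{i,j} ⟨a_i, b_j⟩⁴ = r and Σ_{i,j} ⟨a_i, b_j⟩⁶ = r. -/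
open Matrix

lemma dp_sum {n r : ℕ} (x : Fin n → ℝ) (f : Fin r → (Fin n → ℝ)) :
    x ⬝ᵥ (∑ j, f j) = ∑ j, x ⬝ᵥ f j := by
  simp only [dotProduct, Finset.sum_apply, Finset.mul_sum]
  exact Finset.sum_comm

lemma sum_dp {n r : ℕ} (x : Fin n → ℝ) (f : Fin r → (Fin n → ℝ)) :
    (∑ j, f j) ⬝ᵥ x = ∑ j, f j ⬝ᵥ x := by
  simp only [dotProduct, Finset.sum_apply, Finset.sum_mul]
  exact Finset.sum_comm

lemma bessel_aux {n r : ℕ} (b : Fin r → (Fin n → ℝ))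
    (hb : ∀ i j, b i ⬝ᵥ b j = if i = j then (1 : ℝ) else 0) (x : Fin n → ℝ) :
    ∑ j, (x ⬝ᵥ b j) ^ 2 ≤ x ⬝ᵥ x := by
  have hv : (0:ℝ) ≤ (x - ∑ j, (x ⬝ᵥ b j) • b j) ⬝ᵥ (x - ∑ j, (x ⬝ᵥ b j) • b j) := by
    apply Finset.sum_nonneg; intro k _; exact mul_self_nonneg _
  have hexp : (x - ∑ j, (x ⬝ᵥ b j) • b j) ⬝ᵥ (x - ∑ j, (x ⬝ᵥ b j) • b j)
      = x ⬝ᵥ x - ∑ j, (x ⬝ᵥ b j) ^ 2 := by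
    simp only [dotProduct_sub, sub_dotProduct, dp_sum, sum_dp,
      dotProduct_smul, smul_dotProduct, smul_eq_mul, hb, mul_ite, mul_one, mul_zero,
      Finset.sum_ite_eq, Finset.mem_univ, if_true]
    have h1 : ∀ j : Fin r, (x ⬝ᵥ b j) * (x ⬝ᵥ b j) = (x ⬝ᵥ b j) ^ 2 := fun j => (sq _).symm
    have h2 : ∀ j : Fin r, (x ⬝ᵥ b j) * (b j ⬝ᵥ x) = (x ⬝ᵥ b j) ^ 2 := by
      intro j; rw [dotProduct_comm]; exact (sq _).symm
    simp only [Finset.sum_ite_eq', Finset.mem_univ, if_true, h1, h2]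
    ring
  rw [hexp] at hv
  linarith

/-- For orthonormal families `a₁,…,a_r` and `b₁,…,b_r` in `ℝⁿ`,
if `Σ_{i,j} ⟨aᵢ,bⱼ⟩³ = r` then `Σ_{i,j} ⟨aᵢ,bⱼ⟩⁴ = r` and `Σ_{i,j} ⟨aᵢ,bⱼ⟩⁶ = r`. -/
theorem stmt_4 {n r : ℕ} (a b : Fin r → (Fin n → ℝ))
    (ha : ∀ i j, a i ⬝ᵥ a j = if i = j then (1 : ℝ) else 0)
    (hb : ∀ i j, b i ⬝ᵥ b j = if i = j then (1 : ℝ) else 0)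
    (h : ∑ i, ∑ j, (a i ⬝ᵥ b j) ^ 3 = (r : ℝ)) :
    ∑ i, ∑ j, (a i ⬝ᵥ b j) ^ 4 = (r : ℝ) ∧
    ∑ i, ∑ j, (a i ⬝ᵥ b j) ^ 6 = (r : ℝ) := by
  -- Bessel: each row has ∑ⱼ c² ≤ 1
  have hbes : ∀ i, ∑ j, (a i ⬝ᵥ b j) ^ 2 ≤ 1 := by
    intro i
    have := bessel_aux b hb (a i)
    simpa [ha] using this
  -- hence S₂ ≤ r
  have hS2 : ∑ i, ∑ j, (a i ⬝ᵥ b j) ^ 2 ≤ (r : ℝ) := by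
    calc ∑ i, ∑ j, (a i ⬝ᵥ b j) ^ 2 ≤ ∑ _i : Fin r, (1:ℝ) :=
          Finset.sum_le_sum fun i _ => hbes i
      _ = r := by simp
  -- each entry squared is ≤ 1
  have hc1 : ∀ i j, (a i ⬝ᵥ b j) ^ 2 ≤ 1 := by
    intro i j
    exact le_trans (Finset.single_le_sum (f := fun k => (a i ⬝ᵥ b k) ^ 2)
      (fun k _ => sq_nonneg _) (Finset.mem_univ j)) (hbes i)
  -- S₄ ≤ S₂ termwise
  have hS4le : ∑ i, ∑ j, (a i ⬝ᵥ b j) ^ 4 ≤ ∑ i, ∑ j, (a i ⬝ᵥ b j) ^ 2 := by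
    apply Finset.sum_le_sum; intro i _
    apply Finset.sum_le_sum; intro j _
    nlinarith [hc1 i j, sq_nonneg (a i ⬝ᵥ b j)]
  -- the slack sum: ∑∑ c²(c-1)² = S₄ - 2S₃ + S₂
  have hexp : ∑ i, ∑ j, ((a i ⬝ᵥ b j) ^ 2 * ((a i ⬝ᵥ b j) - 1) ^ 2)
      = (∑ i, ∑ j, (a i ⬝ᵥ b j) ^ 4) - 2 * (∑ i, ∑ j, (a i ⬝ᵥ b j) ^ 3)
        + ∑ i, ∑ j, (a i ⬝ᵥ b j) ^ 2 := by
    simp_rw [show ∀ x : ℝ, x ^ 2 * (x - 1) ^ 2 = x ^ 4 - 2 * x ^ 3 + x ^ 2 from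
      fun x => by ring, Finset.sum_add_distrib, Finset.sum_sub_distrib, Finset.mul_sum]
  have hEnonneg : (0:ℝ) ≤ ∑ i, ∑ j, ((a i ⬝ᵥ b j) ^ 2 * ((a i ⬝ᵥ b j) - 1) ^ 2) := by
    apply Finset.sum_nonneg; intro i _
    apply Finset.sum_nonneg; intro j _
    positivity
  rw [hexp, h] at hEnonneg
  have h4 : ∑ i, ∑ j, (a i ⬝ᵥ b j) ^ 4 = (r : ℝ) := by linarith
  have h2 : ∑ i, ∑ j, (a i ⬝ᵥ b j) ^ 2 = (r : ℝ) := by linarith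
  refine ⟨h4, ?_⟩
  -- the slack sum is zero, so each term is zero
  have hE0 : ∑ i, ∑ j, ((a i ⬝ᵥ b j) ^ 2 * ((a i ⬝ᵥ b j) - 1) ^ 2) = 0 := by
    rw [hexp, h, h4, h2]; ring
  have hterm : ∀ i j, (a i ⬝ᵥ b j) ^ 2 * ((a i ⬝ᵥ b j) - 1) ^ 2 = 0 := by
    intro i j
    have hi := (Finset.sum_eq_zero_iff_of_nonneg (fun i _ => Finset.sum_nonneg
      (fun j _ => by positivity))).mp hE0 i (Finset.mem_univ i)
    exact (Finset.sum_eq_zero_iff_of_nonneg (fun j _ => by positivity)).mp hi j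
      (Finset.mem_univ j)
  -- hence c² = c for each entry, so c⁶ = c²
  have h62 : ∀ i j, (a i ⬝ᵥ b j) ^ 6 = (a i ⬝ᵥ b j) ^ 2 := by
    intro i j
    have hc : (a i ⬝ᵥ b j) ^ 2 = (a i ⬝ᵥ b j) := by
      have h0 : ((a i ⬝ᵥ b j) ^ 2 - (a i ⬝ᵥ b j)) ^ 2 = 0 := by
        have := hterm i j; nlinarith [this]
      have := pow_eq_zero_iff (n := 2) (by norm_num) |>.mp h0
      linarith [this]
    linear_combination ((a i ⬝ᵥ b j) ^ 4 + (a i ⬝ᵥ b j) ^ 3 + (a i ⬝ᵥ b j) ^ 2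
      + (a i ⬝ᵥ b j)) * hc
  calc ∑ i, ∑ j, (a i ⬝ᵥ b j) ^ 6 = ∑ i, ∑ j, (a i ⬝ᵥ b j) ^ 2 := by
        exact Finset.sum_congr rfl fun i _ => Finset.sum_congr rfl fun j _ => h62 i j
    _ = r := h2
end

section
/- Let a₁,…,a_r ∈ ℝⁿ be orthonormal and b₁,…,b_r ∈ ℝⁿ orthonormal. If Σ_{i=1}^r a_i^{⊗3} = Σ_{i=1}^r b_i^{⊗3} (as elements of (ℝⁿ)^{⊗3}), then Σ_{i=1}^r a_i^{⊗6} = Σ_{i=1}^r b_i^{⊗6}. -/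
open Matrix

private lemma key {n k : ℕ} (u v : Fin n → ℝ) :
    ∑ f : Fin k → Fin n, (∏ t, u (f t)) * ∏ t, v (f t) = (u ⬝ᵥ v) ^ k := by
  have h1 : (u ⬝ᵥ v) ^ k = ∏ _t : Fin k, ∑ x, u x * v x := by
    simp [dotProduct, Finset.prod_const]
  rw [h1, Fintype.prod_sum]
  apply Finset.sum_congr rfl
  intro f _
  rw [← Finset.prod_mul_distrib]

private lemma cross {n r k : ℕ} (a b : Fin r → (Fin n → ℝ)) :
    ∑ f : Fin k → Fin n, (∑ i, ∏ t, a i (f t)) * (∑ j, ∏ t, b j (f t)) =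
      ∑ i, ∑ j, (a i ⬝ᵥ b j) ^ k := by
  simp_rw [Finset.sum_mul_sum]
  rw [Finset.sum_comm]
  apply Finset.sum_congr rfl
  intro i _
  rw [Finset.sum_comm]
  apply Finset.sum_congr rfl
  intro j _
  exact key (a i) (b j)

private lemma orth_sum {n r k : ℕ} (a : Fin r → (Fin n → ℝ))
    (ha : ∀ i j, a i ⬝ᵥ a j = if i = j then (1 : ℝ) else 0) (hk : k ≠ 0) :
    ∑ i, ∑ j, (a i ⬝ᵥ a j) ^ k = (r : ℝ) := by
  have : ∀ i j : Fin r, (a i ⬝ᵥ a j) ^ k = if i = j then (1 : ℝ) else 0 := by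
    intro i j
    rw [ha i j]
    split <;> simp [hk]
  simp [this]

/-- For orthonormal families `a₁,…,a_r` and `b₁,…,b_r` in `ℝⁿ`, if the 3-tensors
`Σ aᵢ^{⊗3}` and `Σ bᵢ^{⊗3}` agree, then the 6-tensors `Σ aᵢ^{⊗6}` and `Σ bᵢ^{⊗6}`
agree.  A `k`-tensor is represented as a function `(Fin k → Fin n) → ℝ`. -/
theorem stmt_5 {n r : ℕ} (a b : Fin r → (Fin n → ℝ))
    (ha : ∀ i j, a i ⬝ᵥ a j = if i = j then (1 : ℝ) else 0)
    (hb : ∀ i j, b i ⬝ᵥ b j = if i = j then (1 : ℝ) else 0)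
    (h : (fun f : Fin 3 → Fin n => ∑ i, ∏ t, a i (f t)) =
         (fun f : Fin 3 → Fin n => ∑ i, ∏ t, b i (f t))) :
    (fun f : Fin 6 → Fin n => ∑ i, ∏ t, a i (f t)) =
    (fun f : Fin 6 → Fin n => ∑ i, ∏ t, b i (f t)) := by
  set c : Fin r → Fin r → ℝ := fun i j => a i ⬝ᵥ b j with hc
  -- Σ c^3 = r
  have hS3 : ∑ i, ∑ j, c i j ^ 3 = (r : ℝ) := by
    have := cross (k := 3) a b
    rw [← this]
    have h2 : ∑ f : Fin 3 → Fin n, (∑ i, ∏ t, a i (f t)) * (∑ j, ∏ t, b j (f t)) =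
        ∑ f : Fin 3 → Fin n, (∑ i, ∏ t, a i (f t)) * (∑ j, ∏ t, a j (f t)) := by
      apply Finset.sum_congr rfl
      intro f _
      rw [← congrFun h f]
    rw [h2, cross (k := 3) a a, orth_sum a ha (by norm_num)]
  -- Σ c^2 ≤ r
  have hS2 : ∑ i, ∑ j, c i j ^ 2 ≤ (r : ℝ) := by
    have hcs := Finset.sum_mul_sq_le_sq_mul_sq Finset.univ
      (fun f : Fin 2 → Fin n => ∑ i, ∏ t, a i (f t))
      (fun f : Fin 2 → Fin n => ∑ j, ∏ t, b j (f t))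
    have e1 : ∑ f : Fin 2 → Fin n, (∑ i, ∏ t, a i (f t)) * (∑ j, ∏ t, b j (f t)) =
        ∑ i, ∑ j, c i j ^ 2 := cross a b
    have e2 : ∑ f : Fin 2 → Fin n, (∑ i, ∏ t, a i (f t)) ^ 2 = (r : ℝ) := by
      have := cross (k := 2) a a
      simp_rw [sq]
      rw [this, orth_sum a ha (by norm_num)]
    have e3 : ∑ f : Fin 2 → Fin n, (∑ j, ∏ t, b j (f t)) ^ 2 = (r : ℝ) := by
      have := cross (k := 2) b b
      simp_rw [sq]
      rw [this, orth_sum b hb (by norm_num)]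
    rw [e1, e2, e3] at hcs
    have hnn : (0 : ℝ) ≤ ∑ i, ∑ j, c i j ^ 2 :=
      Finset.sum_nonneg fun i _ => Finset.sum_nonneg fun j _ => sq_nonneg _
    nlinarith [hcs, hnn, Nat.cast_nonneg (α := ℝ) r]
  -- |c i j| ≤ 1, hence c^3 ≤ c^2 termwise
  have hle : ∀ i j, c i j ^ 3 ≤ c i j ^ 2 := by
    intro i j
    have hcs := Finset.sum_mul_sq_le_sq_mul_sq Finset.univ (a i) (b j)
    have ea : ∑ x, a i x ^ 2 = 1 := by
      have := ha i i; simp [dotProduct, sq] at this ⊢; simpa using this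
    have eb : ∑ x, b j x ^ 2 = 1 := by
      have := hb j j; simp [dotProduct, sq] at this ⊢; simpa using this
    rw [ea, eb] at hcs
    have hc2 : c i j ^ 2 ≤ 1 := by simpa [hc, dotProduct] using hcs
    have hc1 : c i j ≤ 1 := by nlinarith [sq_nonneg (c i j)]
    nlinarith [sq_nonneg (c i j)]
  -- termwise equality c^3 = c^2
  have hsum_le : ∑ i, ∑ j, c i j ^ 3 ≤ ∑ i, ∑ j, c i j ^ 2 :=
    Finset.sum_le_sum fun i _ => Finset.sum_le_sum fun j _ => hle i j
  have hsum_eq : ∑ i, ∑ j, c i j ^ 3 = ∑ i, ∑ j, c i j ^ 2 := le_antisymm hsum_le (by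
    rw [hS3]; exact hS2)
  have hterm : ∀ i j, c i j ^ 3 = c i j ^ 2 := by
    have h1 := (Finset.sum_eq_sum_iff_of_le
      (fun i (_ : i ∈ Finset.univ) => Finset.sum_le_sum
        fun j _ => hle i j)).mp hsum_eq
    intro i j
    have h2 := h1 i (Finset.mem_univ i)
    exact (Finset.sum_eq_sum_iff_of_le (fun j (_ : j ∈ Finset.univ) => hle i j)).mp h2 j
      (Finset.mem_univ j)
  -- hence c^6 = c^3 termwise, so Σ c^6 = r
  have hS6 : ∑ i, ∑ j, c i j ^ 6 = (r : ℝ) := by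
    rw [← hS3]
    apply Finset.sum_congr rfl
    intro i _
    apply Finset.sum_congr rfl
    intro j _
    have h4 : c i j ^ 2 * (c i j - 1) = 0 := by linear_combination hterm i j
    rcases mul_eq_zero.mp h4 with h5 | h5
    · have h6 : c i j = 0 := by
        exact pow_eq_zero_iff (n := 2) (by norm_num) |>.mp h5
      simp [h6]
    · have h6 : c i j = 1 := by linarith
      simp [h6]
  -- conclude: the squared norm of the difference of 6-tensors is 0
  have hzero : ∑ f : Fin 6 → Fin n,
      ((∑ i, ∏ t, a i (f t)) - (∑ i, ∏ t, b i (f t))) ^ 2 = 0 := by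
    have expand : ∑ f : Fin 6 → Fin n,
        ((∑ i, ∏ t, a i (f t)) - (∑ i, ∏ t, b i (f t))) ^ 2 =
        (∑ f : Fin 6 → Fin n, (∑ i, ∏ t, a i (f t)) * (∑ j, ∏ t, a j (f t)))
        - 2 * (∑ f : Fin 6 → Fin n, (∑ i, ∏ t, a i (f t)) * (∑ j, ∏ t, b j (f t)))
        + (∑ f : Fin 6 → Fin n, (∑ i, ∏ t, b i (f t)) * (∑ j, ∏ t, b j (f t))) := by
      rw [Finset.mul_sum, ← Finset.sum_sub_distrib, ← Finset.sum_add_distrib]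
      apply Finset.sum_congr rfl
      intro f _
      ring
    rw [expand, cross a a, cross a b, cross b b, orth_sum a ha (by norm_num),
      orth_sum b hb (by norm_num)]
    have : ∑ i, ∑ j, (a i ⬝ᵥ b j) ^ 6 = (r : ℝ) := hS6
    rw [this]
    ring
  funext f
  have hterm0 := (Finset.sum_eq_zero_iff_of_nonneg
    (fun g (_ : g ∈ Finset.univ) => sq_nonneg
      ((∑ i, ∏ t, a i (g t)) - (∑ i, ∏ t, b i (g t))))).mp hzero f (Finset.mem_univ f)
  have := pow_eq_zero_iff (n := 2) (by norm_num) |>.mp hterm0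
  linarith [this]
end

section
/- Let σ ≥ 1 and ρ > 0, and let a₁,…,a_r ∈ ℝⁿ be unit vectors with Σ_i a_i a_iᵀ ⪯ σ·Id and |⟨a_i, a_j⟩| ≤ ρ for all i ≠ j. Then ‖Σ_{i=1}^r a_i^{⊗3}‖_F² ≥ (1 − ρσ)·r and ‖Σ_{i=1}^r a_i^{⊗6}‖_F² ≤ (1 + ρ⁴σ)·r. -/
/-!
Expanding the square, `‖∑ᵢ aᵢ^{⊗k}‖_F² = ∑ᵢ ∑ⱼ ⟨aᵢ, aⱼ⟩ᵏ`, and the diagonal terms contribute `r`.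
Testing `σ • 1 - ∑ⱼ aⱼ aⱼᵀ ⪰ 0` against `aᵢ` gives `∑_{j ≠ i} ⟨aᵢ, aⱼ⟩² ≤ σ - 1`, and since
`|⟨aᵢ, aⱼ⟩| ≤ ρ` off the diagonal, `|∑_{j ≠ i} ⟨aᵢ, aⱼ⟩^(k+2)| ≤ ρᵏ (σ - 1)`; take `k = 1` and `k = 4`.
-/

open Matrix

section

variable {ι m R : Type*} [Fintype ι] [Fintype m]

theorem sum_sq_sum_prod_eq_sum_sum_dotProduct_pow [CommSemiring R] (a : ι → m → R) (k : ℕ) :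
    ∑ f : Fin k → m, (∑ i, ∏ t, a i (f t)) ^ 2 = ∑ i, ∑ j, (a i ⬝ᵥ a j) ^ k := by
  simp only [sq, Finset.sum_mul_sum, ← Finset.prod_mul_distrib]
  rw [Finset.sum_comm]
  refine Finset.sum_congr rfl fun i _ => ?_
  rw [Finset.sum_comm]
  refine Finset.sum_congr rfl fun j _ => ?_
  rw [← Fintype.piFinset_univ,
    ← Finset.prod_univ_sum (fun _ : Fin k => Finset.univ) fun _ x => a i x * a j x,
    Finset.prod_const, Finset.card_univ, Fintype.card_fin, dotProduct]

theorem dotProduct_sum_vecMulVec_self_mulVec [CommSemiring R] (a : ι → m → R) (x : m → R) :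
    x ⬝ᵥ ((∑ j, vecMulVec (a j) (a j)) *ᵥ x) = ∑ j, (x ⬝ᵥ a j) ^ 2 := by
  simp only [sum_mulVec, dotProduct_sum, vecMulVec_mulVec]
  refine Finset.sum_congr rfl fun j _ => ?_
  simp [dotProduct_comm (a j) x, sq]

theorem sum_dotProduct_sq_le_of_posSemidef [DecidableEq m] {σ : ℝ} {a : ι → m → ℝ}
    (hPSD : (σ • (1 : Matrix m m ℝ) - ∑ j, vecMulVec (a j) (a j)).PosSemidef) (x : m → ℝ) :
    ∑ j, (x ⬝ᵥ a j) ^ 2 ≤ σ * (x ⬝ᵥ x) := by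
  have h := hPSD.dotProduct_mulVec_nonneg x
  simp only [star_trivial, sub_mulVec, smul_mulVec, one_mulVec, dotProduct_sub, dotProduct_smul,
    smul_eq_mul, dotProduct_sum_vecMulVec_self_mulVec] at h
  linarith

theorem abs_pow_add_two_le {x ρ : ℝ} (hx : |x| ≤ ρ) (k : ℕ) : |x ^ (k + 2)| ≤ ρ ^ k * x ^ 2 := by
  rw [abs_pow, pow_add, sq_abs]
  exact mul_le_mul_of_nonneg_right (pow_le_pow_left₀ (abs_nonneg x) hx k) (sq_nonneg x)

variable [DecidableEq m] {σ ρ : ℝ} {a : ι → m → ℝ}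

theorem sum_erase_dotProduct_sq_le [DecidableEq ι] (hunit : ∀ i, a i ⬝ᵥ a i = 1)
    (hPSD : (σ • (1 : Matrix m m ℝ) - ∑ j, vecMulVec (a j) (a j)).PosSemidef) (i : ι) :
    ∑ j ∈ Finset.univ.erase i, (a i ⬝ᵥ a j) ^ 2 ≤ σ - 1 := by
  have h := sum_dotProduct_sq_le_of_posSemidef hPSD (a i)
  rw [← Finset.add_sum_erase _ _ (Finset.mem_univ i), hunit i] at h
  linarith

theorem abs_sum_dotProduct_pow_sub_one_le (hunit : ∀ i, a i ⬝ᵥ a i = 1)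
    (hPSD : (σ • (1 : Matrix m m ℝ) - ∑ j, vecMulVec (a j) (a j)).PosSemidef) (hρ : 0 ≤ ρ)
    (hρbound : ∀ i j, i ≠ j → |a i ⬝ᵥ a j| ≤ ρ) (k : ℕ) (i : ι) :
    |∑ j, (a i ⬝ᵥ a j) ^ (k + 2) - 1| ≤ ρ ^ k * (σ - 1) := by
  classical
  rw [← Finset.add_sum_erase _ _ (Finset.mem_univ i), hunit i, one_pow, add_sub_cancel_left]
  calc |∑ j ∈ Finset.univ.erase i, (a i ⬝ᵥ a j) ^ (k + 2)|
      ≤ ∑ j ∈ Finset.univ.erase i, ρ ^ k * (a i ⬝ᵥ a j) ^ 2 :=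
        (Finset.abs_sum_le_sum_abs _ _).trans <| Finset.sum_le_sum fun j hj =>
          abs_pow_add_two_le (hρbound i j (Finset.ne_of_mem_erase hj).symm) k
    _ ≤ ρ ^ k * (σ - 1) := by
        rw [← Finset.mul_sum]
        exact mul_le_mul_of_nonneg_left (sum_erase_dotProduct_sq_le hunit hPSD i) (by positivity)

theorem abs_sum_sum_dotProduct_pow_sub_card_le (hunit : ∀ i, a i ⬝ᵥ a i = 1)
    (hPSD : (σ • (1 : Matrix m m ℝ) - ∑ j, vecMulVec (a j) (a j)).PosSemidef) (hρ : 0 ≤ ρ)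
    (hρbound : ∀ i j, i ≠ j → |a i ⬝ᵥ a j| ≤ ρ) (k : ℕ) :
    |∑ i, ∑ j, (a i ⬝ᵥ a j) ^ (k + 2) - Fintype.card ι| ≤ Fintype.card ι * (ρ ^ k * (σ - 1)) := by
  calc |∑ i, ∑ j, (a i ⬝ᵥ a j) ^ (k + 2) - Fintype.card ι|
      = |∑ i, (∑ j, (a i ⬝ᵥ a j) ^ (k + 2) - 1)| := by simp
    _ ≤ ∑ i, |∑ j, (a i ⬝ᵥ a j) ^ (k + 2) - 1| := Finset.abs_sum_le_sum_abs _ _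
    _ ≤ ∑ _i : ι, ρ ^ k * (σ - 1) := Finset.sum_le_sum fun i _ =>
        abs_sum_dotProduct_pow_sub_one_le hunit hPSD hρ hρbound k i
    _ = Fintype.card ι * (ρ ^ k * (σ - 1)) := by simp

end

theorem stmt_7_general {n r : ℕ} (σ ρ : ℝ) (hρ : 0 < ρ)
    (a : Fin r → (Fin n → ℝ))
    (hunit : ∀ i, a i ⬝ᵥ a i = 1)
    (hPSD : (σ • (1 : Matrix (Fin n) (Fin n) ℝ) -
      ∑ i, vecMulVec (a i) (a i)).PosSemidef)
    (hρbound : ∀ i j, i ≠ j → |a i ⬝ᵥ a j| ≤ ρ) :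
    (1 - ρ * σ) * r ≤ ∑ f : Fin 3 → Fin n, (∑ i, ∏ t, a i (f t)) ^ 2 ∧
    ∑ f : Fin 6 → Fin n, (∑ i, ∏ t, a i (f t)) ^ 2 ≤ (1 + ρ ^ 4 * σ) * r := by
  rw [sum_sq_sum_prod_eq_sum_sum_dotProduct_pow, sum_sq_sum_prod_eq_sum_sum_dotProduct_pow]
  have h3 := abs_le.1 (abs_sum_sum_dotProduct_pow_sub_card_le hunit hPSD hρ.le hρbound 1)
  have h6 := abs_le.1 (abs_sum_sum_dotProduct_pow_sub_card_le hunit hPSD hρ.le hρbound 4)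
  simp only [Fintype.card_fin, pow_one] at h3 h6
  have hr : (0 : ℝ) ≤ r := r.cast_nonneg
  constructor <;> linarith [mul_nonneg hr hρ.le, mul_nonneg hr (pow_nonneg hρ.le 4)]

/-- For `(σ,ρ)`-incoherent unit vectors `a₁,…,a_r` (i.e. `Σ aᵢaᵢᵀ ⪯ σ·Id` and
`|⟨aᵢ,aⱼ⟩| ≤ ρ` for `i ≠ j`), one has
`‖Σ aᵢ^{⊗3}‖_F² ≥ (1 − ρσ)·r` and `‖Σ aᵢ^{⊗6}‖_F² ≤ (1 + ρ⁴σ)·r`. -/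
theorem stmt_7 {n r : ℕ} (σ ρ : ℝ) (hσ : 1 ≤ σ) (hρ : 0 < ρ)
    (a : Fin r → (Fin n → ℝ))
    (hunit : ∀ i, a i ⬝ᵥ a i = 1)
    (hPSD : (σ • (1 : Matrix (Fin n) (Fin n) ℝ) -
      ∑ i, vecMulVec (a i) (a i)).PosSemidef)
    (hρbound : ∀ i j, i ≠ j → |a i ⬝ᵥ a j| ≤ ρ) :
    (1 - ρ * σ) * r ≤ ∑ f : Fin 3 → Fin n, (∑ i, ∏ t, a i (f t)) ^ 2 ∧
    ∑ f : Fin 6 → Fin n, (∑ i, ∏ t, a i (f t)) ^ 2 ≤ (1 + ρ ^ 4 * σ) * r :=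
  stmt_7_general σ ρ hρ a hunit hPSD hρbound
end

section
/- Let a₁,…,a_r ∈ ℝⁿ be unit vectors with Σ_i a_i a_iᵀ ⪯ σ·Id and |⟨a_i,a_j⟩| ≤ ρ for i ≠ j, and let b₁,…,b_r ∈ ℝⁿ be unit vectors. If Σ_{i,j} ⟨a_i, b_j⟩³ ≥ (1 − ρσ)·r, then Σ_{i,j} ⟨a_i, b_j⟩⁴ ≥ (1 − ρσ² − 2ρσ)·r. -/
open Matrix

section Incoherence

variable {m ι : Type*} [Fintype m] [Fintype ι]

theorem two_mul_dotProduct_le_add (v w : m → ℝ) : 2 * (v ⬝ᵥ w) ≤ v ⬝ᵥ v + w ⬝ᵥ w := by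
  simp only [dotProduct, Finset.mul_sum, ← Finset.sum_add_distrib]
  exact Finset.sum_le_sum fun k _ => by nlinarith [two_mul_le_add_sq (v k) (w k)]

theorem sum_sq_dotProduct_le_of_posSemidef [DecidableEq m] {σ : ℝ} {a : ι → m → ℝ}
    (hPSD : (σ • (1 : Matrix m m ℝ) - ∑ i, vecMulVec (a i) (a i)).PosSemidef) (x : m → ℝ) :
    ∑ i, (a i ⬝ᵥ x) ^ 2 ≤ σ * (x ⬝ᵥ x) := by
  have hx := hPSD.dotProduct_mulVec_nonneg x
  simp only [star_trivial, sub_mulVec, smul_mulVec, one_mulVec, sum_mulVec, vecMulVec_mulVec,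
    op_smul_eq_smul, dotProduct_sub, dotProduct_smul, dotProduct_sum, smul_eq_mul] at hx
  simp only [dotProduct_comm x (a _), ← sq] at hx
  linarith

/-- Gram expansion: the diagonal contributes `∑ wᵢ²`, each off-diagonal term at most `ρ wᵢ wⱼ`. -/
theorem dotProduct_self_sum_smul_le {ρ : ℝ} (hρ : 0 ≤ ρ) {a : ι → m → ℝ}
    (haunit : ∀ i, a i ⬝ᵥ a i = 1) (hρbound : ∀ i j, i ≠ j → |a i ⬝ᵥ a j| ≤ ρ)
    {w : ι → ℝ} (hw : ∀ i, 0 ≤ w i) :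
    (∑ i, w i • a i) ⬝ᵥ (∑ i, w i • a i) ≤ ∑ i, w i ^ 2 + ρ * (∑ i, w i) ^ 2 := by
  classical
  have hterm : ∀ i k, w i * w k * (a i ⬝ᵥ a k) ≤
      (if i = k then w i * w k else 0) + ρ * (w i * w k) := fun i k => by
    have hwik := mul_nonneg (hw i) (hw k)
    by_cases hik : i = k
    · subst hik; simp only [haunit, if_true]; nlinarith
    · simp only [hik, if_false]
      nlinarith [(abs_le.1 (hρbound i k hik)).2]
  calc (∑ i, w i • a i) ⬝ᵥ (∑ i, w i • a i)
      = ∑ i, ∑ k, w i * w k * (a i ⬝ᵥ a k) := by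
        simp only [sum_dotProduct, dotProduct_sum, smul_dotProduct, dotProduct_smul, smul_eq_mul,
          Finset.mul_sum]
        rw [Finset.sum_comm]
        congr! 2 with i _ k _
        rw [dotProduct_comm]
        ring
    _ ≤ ∑ i, ∑ k, ((if i = k then w i * w k else 0) + ρ * (w i * w k)) :=
        Finset.sum_le_sum fun i _ => Finset.sum_le_sum fun k _ => hterm i k
    _ = ∑ i, w i ^ 2 + ρ * (∑ i, w i) ^ 2 := by
        simp only [Finset.sum_add_distrib, Finset.sum_ite_eq, Finset.mem_univ, if_true,
          ← Finset.mul_sum, ← Finset.sum_mul, sq]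

/-- The cubic sum is `⟨v, x⟩` for `v = ∑ᵢ ⟨aᵢ, x⟩² aᵢ`; bound it by `(‖v‖² + ‖x‖²) / 2`. -/
theorem sum_dotProduct_pow_three_le {σ ρ : ℝ} (hρ : 0 ≤ ρ) {a : ι → m → ℝ}
    (haunit : ∀ i, a i ⬝ᵥ a i = 1) (hρbound : ∀ i j, i ≠ j → |a i ⬝ᵥ a j| ≤ ρ)
    {x : m → ℝ} (hx : x ⬝ᵥ x = 1) (hσ : ∑ i, (a i ⬝ᵥ x) ^ 2 ≤ σ) :
    ∑ i, (a i ⬝ᵥ x) ^ 3 ≤ (1 + ρ * σ ^ 2 + ∑ i, (a i ⬝ᵥ x) ^ 4) / 2 := by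
  set v := ∑ i, (a i ⬝ᵥ x) ^ 2 • a i
  have hvx : v ⬝ᵥ x = ∑ i, (a i ⬝ᵥ x) ^ 3 := by
    simp only [v, sum_dotProduct, smul_dotProduct, smul_eq_mul]
    exact Finset.sum_congr rfl fun i _ => by ring
  have hvv : v ⬝ᵥ v ≤ ∑ i, (a i ⬝ᵥ x) ^ 4 + ρ * σ ^ 2 := by
    have hS : (∑ i, (a i ⬝ᵥ x) ^ 2) ^ 2 ≤ σ ^ 2 :=
      pow_le_pow_left₀ (Finset.sum_nonneg fun i _ => sq_nonneg _) hσ 2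
    have := dotProduct_self_sum_smul_le hρ haunit hρbound fun i => sq_nonneg (a i ⬝ᵥ x)
    simp only [← pow_mul] at this
    nlinarith
  have := two_mul_dotProduct_le_add v x
  linarith

end Incoherence

theorem stmt_8_general {n r : ℕ} (σ ρ : ℝ) (hρ : 0 < ρ)
    (a b : Fin r → (Fin n → ℝ))
    (haunit : ∀ i, a i ⬝ᵥ a i = 1)
    (hbunit : ∀ j, b j ⬝ᵥ b j = 1)
    (hPSD : (σ • (1 : Matrix (Fin n) (Fin n) ℝ) -
      ∑ i, vecMulVec (a i) (a i)).PosSemidef)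
    (hρbound : ∀ i j, i ≠ j → |a i ⬝ᵥ a j| ≤ ρ)
    (h : (1 - ρ * σ) * r ≤ ∑ i, ∑ j, (a i ⬝ᵥ b j) ^ 3) :
    (1 - ρ * σ ^ 2 - 2 * ρ * σ) * r ≤ ∑ i, ∑ j, (a i ⬝ᵥ b j) ^ 4 := by
  have hcol : ∀ j, ∑ i, (a i ⬝ᵥ b j) ^ 3 ≤ (1 + ρ * σ ^ 2 + ∑ i, (a i ⬝ᵥ b j) ^ 4) / 2 :=
    fun j => sum_dotProduct_pow_three_le hρ.le haunit hρbound (hbunit j) <| by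
      simpa [hbunit j] using sum_sq_dotProduct_le_of_posSemidef hPSD (b j)
  have hsum := Finset.sum_le_sum fun j (_ : j ∈ Finset.univ) => hcol j
  rw [← Finset.sum_div, Finset.sum_add_distrib, Finset.sum_const, Finset.card_univ,
    Fintype.card_fin, nsmul_eq_mul] at hsum
  rw [Finset.sum_comm] at h ⊢
  linarith

/-- For `(σ,ρ)`-incoherent unit vectors `a₁,…,a_r` and unit vectors `b₁,…,b_r`,
if `Σ_{i,j} ⟨aᵢ,bⱼ⟩³ ≥ (1 − ρσ)·r` then
`Σ_{i,j} ⟨aᵢ,bⱼ⟩⁴ ≥ (1 − ρσ² − 2ρσ)·r`. -/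
theorem stmt_8 {n r : ℕ} (σ ρ : ℝ) (hσ : 1 ≤ σ) (hρ : 0 < ρ)
    (a b : Fin r → (Fin n → ℝ))
    (haunit : ∀ i, a i ⬝ᵥ a i = 1)
    (hbunit : ∀ j, b j ⬝ᵥ b j = 1)
    (hPSD : (σ • (1 : Matrix (Fin n) (Fin n) ℝ) -
      ∑ i, vecMulVec (a i) (a i)).PosSemidef)
    (hρbound : ∀ i j, i ≠ j → |a i ⬝ᵥ a j| ≤ ρ)
    (h : (1 - ρ * σ) * r ≤ ∑ i, ∑ j, (a i ⬝ᵥ b j) ^ 3) :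
    (1 - ρ * σ ^ 2 - 2 * ρ * σ) * r ≤ ∑ i, ∑ j, (a i ⬝ᵥ b j) ^ 4 :=
  stmt_8_general σ ρ hρ a b haunit hbunit hPSD hρbound h
end

section
/- Let A ∈ ℝ^{n×r} have unit-norm columns a₁,…,a_r with ‖Id_r − AᵀA‖ ≤ ε (operator norm), and let E ∈ (ℝⁿ)^{⊗3} with ‖E‖_F² ≤ ε·r. Define, for v ∈ ℝⁿ, the contraction M_v(E) ∈ ℝ^{n×n}. Then Σ_{i=1}^r ‖M_{a_i}(E)‖_F² ≤ (1+ε)·ε·r, and hence at least half of the indices i ∈ [r] satisfy ‖M_{a_i}(E)‖_F² ≤ 4ε (for ε ≤ 1). -/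
/-!
Since `‖Aᵀw‖² = ⟨w, A Aᵀw⟩ ≤ ‖w‖ ‖A Aᵀw‖` and `‖A u‖² = ⟨u, AᵀA u⟩ ≤ (1 + ε)‖u‖²`, the map
`w ↦ Aᵀw` has norm at most `√(1 + ε)`. Applied to each fibre `E j k ·` this bounds
`Σᵢ ‖M_{aᵢ}(E)‖_F²` by `(1 + ε)‖E‖_F²`, and Markov's inequality at level `4ε` gives the second part.
-/

open Matrix Finset

theorem card_le_two_mul_card_filter_le {ι : Type*} [Fintype ι] (f : ι → ℝ) (hf : ∀ i, 0 ≤ f i)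
    {t : ℝ} (ht : 0 ≤ t) (hsum : 2 * ∑ i, f i ≤ t * Fintype.card ι) :
    Fintype.card ι ≤ 2 * #{i | f i ≤ t} := by
  have hsplit : #{i | f i ≤ t} + #{i | ¬f i ≤ t} = Fintype.card ι :=
    card_filter_add_card_filter_not _
  suffices 2 * #{i | ¬f i ≤ t} ≤ Fintype.card ι by omega
  obtain hbad | hbad := ({i | ¬f i ≤ t} : Finset ι).eq_empty_or_nonempty
  · rw [hbad, card_empty]; omega
  have hlt : ∑ i with ¬f i ≤ t, t < ∑ i with ¬f i ≤ t, f i :=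
    sum_lt_sum_of_nonempty hbad fun i hi => not_le.mp (mem_filter.mp hi).2
  have hle : ∑ i with ¬f i ≤ t, f i ≤ ∑ i, f i := sum_le_univ_sum_of_nonneg hf
  have : t * (2 * #{i | ¬f i ≤ t} : ℕ) < t * Fintype.card ι := by
    rw [sum_const, nsmul_eq_mul] at hlt
    push_cast
    linarith
  exact_mod_cast (lt_of_mul_lt_mul_left this ht).le

theorem dotProduct_vecMul_self_le {m ι : Type*} [Fintype m] [Fintype ι] (A : Matrix m ι ℝ)
    {c : ℝ} (hc : 0 ≤ c) (hA : ∀ v, v ⬝ᵥ ((Aᵀ * A) *ᵥ v) ≤ c * (v ⬝ᵥ v)) (w : m → ℝ) :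
    w ᵥ* A ⬝ᵥ w ᵥ* A ≤ c * (w ⬝ᵥ w) := by
  set u := w ᵥ* A
  have hAu : A *ᵥ u ⬝ᵥ A *ᵥ u ≤ c * (u ⬝ᵥ u) := by
    simpa only [← mulVec_mulVec, dotProduct_mulVec, vecMul_transpose] using hA u
  have hCS : (u ⬝ᵥ u) ^ 2 ≤ (w ⬝ᵥ w) * (A *ᵥ u ⬝ᵥ A *ᵥ u) := by
    rw [← dotProduct_mulVec]
    simpa only [dotProduct, sq] using sum_mul_sq_le_sq_mul_sq univ w (A *ᵥ u)
  have hu : 0 ≤ u ⬝ᵥ u := sum_nonneg fun i _ => mul_self_nonneg (u i)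
  have hw : 0 ≤ w ⬝ᵥ w := sum_nonneg fun i _ => mul_self_nonneg (w i)
  rcases hu.eq_or_lt with hu0 | hupos
  · rw [← hu0]; positivity
  · nlinarith

theorem sum_sum_sum_sq_contract_le {m ι κ₁ κ₂ : Type*} [Fintype m] [Fintype ι] [Fintype κ₁]
    [Fintype κ₂] (A : Matrix m ι ℝ) {c : ℝ} (hc : 0 ≤ c)
    (hA : ∀ v, v ⬝ᵥ ((Aᵀ * A) *ᵥ v) ≤ c * (v ⬝ᵥ v)) (E : κ₁ → κ₂ → m → ℝ) :
    ∑ i, ∑ j, ∑ k, (∑ l, E j k l * A l i) ^ 2 ≤ c * ∑ j, ∑ k, ∑ l, E j k l ^ 2 := calc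
  ∑ i, ∑ j, ∑ k, (∑ l, E j k l * A l i) ^ 2 = ∑ j, ∑ k, E j k ᵥ* A ⬝ᵥ E j k ᵥ* A := by
    rw [sum_comm]
    refine sum_congr rfl fun j _ => ?_
    rw [sum_comm]
    simp only [dotProduct, vecMul, sq]
  _ ≤ ∑ j, ∑ k, c * (E j k ⬝ᵥ E j k) := by
    gcongr with j _ k _
    exact dotProduct_vecMul_self_le A hc hA (E j k)
  _ = c * ∑ j, ∑ k, ∑ l, E j k l ^ 2 := by simp only [mul_sum, dotProduct, sq]

theorem stmt_13_general {n r : ℕ} (ε : ℝ) (A : Matrix (Fin n) (Fin r) ℝ)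
    (hop : ∀ v : Fin r → ℝ,
      |v ⬝ᵥ (((1 : Matrix (Fin r) (Fin r) ℝ) - Aᵀ * A) *ᵥ v)| ≤ ε * (v ⬝ᵥ v))
    (E : Fin n → Fin n → Fin n → ℝ)
    (hE : ∑ j, ∑ k, ∑ l, (E j k l) ^ 2 ≤ ε * r) :
    (∑ i, ∑ j, ∑ k, (∑ l, E j k l * A l i) ^ 2 ≤ (1 + ε) * ε * r) ∧
    (ε ≤ 1 → r ≤ 2 * (Finset.univ.filter
      (fun i : Fin r => ∑ j, ∑ k, (∑ l, E j k l * A l i) ^ 2 ≤ 4 * ε)).card) := by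
  rcases Nat.eq_zero_or_pos r with rfl | hr
  · simp
  have hε : 0 ≤ ε := by
    have h : 0 ≤ ε * r := (by positivity : (0 : ℝ) ≤ ∑ j, ∑ k, ∑ l, E j k l ^ 2).trans hE
    exact nonneg_of_mul_nonneg_left h (by exact_mod_cast hr)
  have hAtA : ∀ v, v ⬝ᵥ ((Aᵀ * A) *ᵥ v) ≤ (1 + ε) * (v ⬝ᵥ v) := fun v => by
    have := (abs_le.mp (hop v)).1
    rw [sub_mulVec, one_mulVec, dotProduct_sub] at this
    linarith
  have hsum := (sum_sum_sum_sq_contract_le A (by linarith) hAtA E).trans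
    (mul_le_mul_of_nonneg_left hE (by linarith))
  refine ⟨by linarith, fun hε1 => ?_⟩
  have hhalf : 2 * ∑ i, ∑ j, ∑ k, (∑ l, E j k l * A l i) ^ 2 ≤ 4 * ε * Fintype.card (Fin r) := by
    rw [Fintype.card_fin]
    nlinarith [mul_nonneg (mul_nonneg hε (sub_nonneg.mpr hε1)) r.cast_nonneg]
  simpa using card_le_two_mul_card_filter_le _ (fun i => by positivity) (by linarith) hhalf

/-- If `A` has unit columns `aᵢ` with `‖Id − AᵀA‖ ≤ ε` (operator norm, stated via
quadratic forms), and `E` is a 3-tensor with `‖E‖_F² ≤ ε·r`, then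
`Σᵢ ‖M_{aᵢ}(E)‖_F² ≤ (1+ε)·ε·r`, and (for `ε ≤ 1`) at least half of the indices
`i` satisfy `‖M_{aᵢ}(E)‖_F² ≤ 4ε`.  Here `M_v(E)_{jk} = Σ_ℓ E_{jkℓ} v_ℓ`. -/
theorem stmt_13 {n r : ℕ} (ε : ℝ) (A : Matrix (Fin n) (Fin r) ℝ)
    (hunit : ∀ i, (fun j => A j i) ⬝ᵥ (fun j => A j i) = 1)
    (hop : ∀ v : Fin r → ℝ,
      |v ⬝ᵥ (((1 : Matrix (Fin r) (Fin r) ℝ) - Aᵀ * A) *ᵥ v)| ≤ ε * (v ⬝ᵥ v))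
    (E : Fin n → Fin n → Fin n → ℝ)
    (hE : ∑ j, ∑ k, ∑ l, (E j k l) ^ 2 ≤ ε * r) :
    (∑ i, ∑ j, ∑ k, (∑ l, E j k l * A l i) ^ 2 ≤ (1 + ε) * ε * r) ∧
    (ε ≤ 1 → r ≤ 2 * (Finset.univ.filter
      (fun i : Fin r => ∑ j, ∑ k, (∑ l, E j k l * A l i) ^ 2 ≤ 4 * ε)).card) :=
  stmt_13_general ε A hop E hE
end

section
/- Let a₁,…,a_r ∈ ℝⁿ be unit vectors forming the columns of a matrix A with ‖Id_r − AᵀA‖ ≤ ε. For any fixed index i, the matrix D_i := Σ_{j≠i} ⟨a_i, a_j⟩ · a_j a_jᵀ satisfies ‖D_i‖ ≤ (1+ε)·ε (operator norm), where D_i = M_{a_i}(S) − a_i a_iᵀ for S = Σ_j a_j^{⊗3}. -/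
/-!
The quadratic form of `Dᵢ` is `Σ_{j≠i} ⟨aᵢ,aⱼ⟩ ⟨aⱼ,v⟩²`. The Gram matrix `AᵀA` has unit diagonal,
so testing `|uᵀ(1 - AᵀA)u| ≤ ε‖u‖²` on `u = e_i + e_j` gives `|⟨aᵢ,aⱼ⟩| ≤ ε` for `j ≠ i`. Hence the
form is bounded by `ε Σ_j ⟨aⱼ,v⟩² = ε‖Aᵀv‖² ≤ ε‖A‖²‖v‖² ≤ ε(1+ε)‖v‖²`.
-/

open Matrix Finset

variable {m k : Type*} [Fintype m] [Fintype k]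

lemma dotProduct_sq_le_dotProduct_self_mul (x y : m → ℝ) :
    (x ⬝ᵥ y) ^ 2 ≤ (x ⬝ᵥ x) * (y ⬝ᵥ y) := by
  simpa only [dotProduct, pow_two] using sum_mul_sq_le_sq_mul_sq univ x y

section QuadraticForm

variable [DecidableEq k] {N : Matrix k k ℝ} {ε : ℝ}

lemma nonneg_of_abs_dotProduct_mulVec_le (hN : ∀ v, |v ⬝ᵥ (N *ᵥ v)| ≤ ε * (v ⬝ᵥ v))
    (p : k) : 0 ≤ ε := by
  simpa [mulVec_single_one] using (abs_nonneg _).trans (hN (Pi.single p 1))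

lemma abs_apply_le_of_abs_dotProduct_mulVec_le (hN : ∀ v, |v ⬝ᵥ (N *ᵥ v)| ≤ ε * (v ⬝ᵥ v))
    (hsymm : N.IsSymm) (hdiag : ∀ p, N p p = 0) {p q : k} (hpq : p ≠ q) : |N p q| ≤ ε := by
  have h := hN (Pi.single p 1 + Pi.single q 1)
  simp only [mulVec_add, dotProduct_add, add_dotProduct, mulVec_single_one,
    single_one_dotProduct, col_apply, hdiag, hsymm.apply p q, Pi.single_eq_same,
    Pi.single_eq_of_ne hpq, Pi.single_eq_of_ne hpq.symm] at h
  rw [show (0 + N p q + (N p q + 0) : ℝ) = 2 * N p q by ring, abs_mul, abs_two] at h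
  linarith

end QuadraticForm

lemma dotProduct_mulVec_self_le_of_abs_one_sub {A : Matrix m k ℝ} {ε : ℝ} [DecidableEq k]
    (hA : ∀ u, |u ⬝ᵥ ((1 - Aᵀ * A) *ᵥ u)| ≤ ε * (u ⬝ᵥ u)) (u : k → ℝ) :
    (A *ᵥ u) ⬝ᵥ (A *ᵥ u) ≤ (1 + ε) * (u ⬝ᵥ u) := by
  have h := neg_le_of_abs_le (hA u)
  rw [sub_mulVec, one_mulVec, dotProduct_sub, ← mulVec_mulVec, dotProduct_mulVec,
    vecMul_transpose] at h
  linarith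

/-- `‖Aᵀ‖ ≤ ‖A‖`, via `‖Aᵀv‖⁴ = ⟨A Aᵀv, v⟩² ≤ ‖A Aᵀv‖² ‖v‖²`. -/
lemma dotProduct_transpose_mulVec_self_le {A : Matrix m k ℝ} {c : ℝ} (hc : 0 ≤ c)
    (hA : ∀ u, (A *ᵥ u) ⬝ᵥ (A *ᵥ u) ≤ c * (u ⬝ᵥ u)) (v : m → ℝ) :
    (Aᵀ *ᵥ v) ⬝ᵥ (Aᵀ *ᵥ v) ≤ c * (v ⬝ᵥ v) := by
  set u := Aᵀ *ᵥ v
  have hv0 : 0 ≤ v ⬝ᵥ v := Fintype.sum_nonneg fun _ => mul_self_nonneg _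
  have hu : u ⬝ᵥ u = (A *ᵥ u) ⬝ᵥ v := by
    rw [dotProduct_mulVec, vecMul_transpose]
  have hsq : (u ⬝ᵥ u) ^ 2 ≤ c * (u ⬝ᵥ u) * (v ⬝ᵥ v) := calc
    (u ⬝ᵥ u) ^ 2 ≤ ((A *ᵥ u) ⬝ᵥ (A *ᵥ u)) * (v ⬝ᵥ v) :=
      hu ▸ dotProduct_sq_le_dotProduct_self_mul _ _
    _ ≤ c * (u ⬝ᵥ u) * (v ⬝ᵥ v) :=
      mul_le_mul_of_nonneg_right (hA u) hv0
  nlinarith [mul_nonneg hc hv0]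

lemma dotProduct_sum_smul_vecMulVec_mulVec {ι : Type*} (s : Finset ι) (c : ι → ℝ)
    (w : ι → m → ℝ) (v : m → ℝ) :
    v ⬝ᵥ ((∑ j ∈ s, c j • vecMulVec (w j) (w j)) *ᵥ v) = ∑ j ∈ s, c j * (w j ⬝ᵥ v) ^ 2 := by
  simp only [sum_mulVec, smul_mulVec, vecMulVec_mulVec, op_smul_eq_smul, dotProduct_sum,
    dotProduct_smul, smul_eq_mul, dotProduct_comm v (w _)]
  exact sum_congr rfl fun j _ => by ring

lemma abs_sum_mul_sq_le {s : Finset k} {c x : k → ℝ} {ε : ℝ} (hε : 0 ≤ ε)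
    (hc : ∀ j ∈ s, |c j| ≤ ε) : |∑ j ∈ s, c j * x j ^ 2| ≤ ε * (x ⬝ᵥ x) := calc
  |∑ j ∈ s, c j * x j ^ 2| ≤ ∑ j ∈ s, ε * x j ^ 2 := by
    refine (abs_sum_le_sum_abs _ _).trans (sum_le_sum fun j hj => ?_)
    rw [abs_mul, abs_sq]
    exact mul_le_mul_of_nonneg_right (hc j hj) (sq_nonneg _)
  _ ≤ ∑ j, ε * x j ^ 2 :=
    sum_le_sum_of_subset_of_nonneg (subset_univ s) fun _ _ _ => by positivity
  _ = ε * (x ⬝ᵥ x) := by simp only [← mul_sum, dotProduct, pow_two]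

/-- If `A` has unit columns `a₁,…,a_r` with `‖Id − AᵀA‖ ≤ ε` (operator norm,
stated via quadratic forms), then for each `i` the matrix
`Dᵢ = Σ_{j≠i} ⟨aᵢ,aⱼ⟩ aⱼaⱼᵀ` has operator norm at most `(1+ε)·ε`. -/
theorem stmt_14 {n r : ℕ} (ε : ℝ) (A : Matrix (Fin n) (Fin r) ℝ)
    (a : Fin r → (Fin n → ℝ)) (haA : ∀ i j, a i j = A j i)
    (hunit : ∀ i, a i ⬝ᵥ a i = 1)
    (hop : ∀ v : Fin r → ℝ,
      |v ⬝ᵥ (((1 : Matrix (Fin r) (Fin r) ℝ) - Aᵀ * A) *ᵥ v)| ≤ ε * (v ⬝ᵥ v))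
    (i : Fin r) (D : Matrix (Fin n) (Fin n) ℝ)
    (hD : D = ∑ j ∈ Finset.univ.erase i, (a i ⬝ᵥ a j) • vecMulVec (a j) (a j)) :
    ∀ v : Fin n → ℝ, |v ⬝ᵥ (D *ᵥ v)| ≤ (1 + ε) * ε * (v ⬝ᵥ v) := by
  have hgram : ∀ p q, (Aᵀ * A) p q = a p ⬝ᵥ a q := fun p q => by
    simp [mul_apply, dotProduct, haA]
  have hcoord : ∀ v, Aᵀ *ᵥ v = fun j => a j ⬝ᵥ v := fun v => by
    ext j
    simp [mulVec, dotProduct, haA]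
  have hε : 0 ≤ ε := nonneg_of_abs_dotProduct_mulVec_le hop i
  have hoff : ∀ j ∈ univ.erase i, |a i ⬝ᵥ a j| ≤ ε := fun j hj => by
    have hij := (ne_of_mem_erase hj).symm
    simpa [hgram, one_apply_ne hij] using abs_apply_le_of_abs_dotProduct_mulVec_le hop
      (isSymm_one.sub (by simp [IsSymm, transpose_mul])) (by simp [hgram, hunit]) hij
  have hcols := dotProduct_transpose_mulVec_self_le (by linarith)
    (dotProduct_mulVec_self_le_of_abs_one_sub hop)
  intro v
  rw [hD, dotProduct_sum_smul_vecMulVec_mulVec]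
  calc _ ≤ ε * ((Aᵀ *ᵥ v) ⬝ᵥ (Aᵀ *ᵥ v)) := hcoord v ▸ abs_sum_mul_sq_le hε hoff
    _ ≤ ε * ((1 + ε) * (v ⬝ᵥ v)) := mul_le_mul_of_nonneg_left (hcols v) hε
    _ = (1 + ε) * ε * (v ⬝ᵥ v) := by ring
end
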